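/- arXiv:2603.22802 — 3 statements merged into one kernel-verified Lean document; each statement's English description precedes it below -/
import Mathlib

section
/- Let φ : ℝ → ℝ be continuous, monotonically increasing with φ(0) = 0 and r·φ(r) > 0 for all r ≠ 0, and suppose ∫₀^{v₀} dv/φ(v) < ∞ for every v₀ > 0. If v : [0,∞) → ℝ is a solution of the scalar ODE v' = -φ(v) with v(0) = v₀ > 0, then v(t) = 0 for all t ≥ T(v₀) where T(v₀) = ∫₀^{v₀} dv/φ(v) < ∞; in particular v reaches zero in finite time. -/
/-!
Separating variables, the time a positive solution of `v' = -φ(v)` needs to descend from `v₀`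
to `v(t)` is `∫_{v(t)}^{v₀} ds / φ(s)`. If `v` had no zero on `[0, T(v₀)]` it would stay positive
there, and this identity at `t = T(v₀)` would leave `∫₀^{v(T)} ds / φ(s) = 0` with `v(T) > 0`,
which is impossible. Once `v` vanishes it stays zero, since `(v²)' = -2 v φ(v) ≤ 0`.
-/

open MeasureTheory Set intervalIntegral
open scoped Interval

theorem IsPreconnected.forall_pos_of_forall_ne_zero {s : Set ℝ} {f : ℝ → ℝ} {a : ℝ}
    (hs : IsPreconnected s) (hf : ContinuousOn f s) (ha : a ∈ s) (hfa : 0 < f a)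
    (hne : ∀ x ∈ s, f x ≠ 0) : ∀ x ∈ s, 0 < f x := by
  intro x hx
  by_contra! hfx
  obtain ⟨y, hy, hfy⟩ := hs.intermediate_value hx ha hf ⟨hfx, hfa.le⟩
  exact hne y hy hfy

section ScalarODE

variable {φ v : ℝ → ℝ}

theorem integral_inv_eq_sub_of_hasDerivAt {a b : ℝ} (hφ : Continuous φ)
    (hsol : ∀ t ∈ [[a, b]], HasDerivAt v (-φ (v t)) t) (hφv : ∀ t ∈ [[a, b]], φ (v t) ≠ 0) :
    ∫ s in v b..v a, (φ s)⁻¹ = b - a := by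
  have hv : ContinuousOn v [[a, b]] := fun t ht => (hsol t ht).continuousAt.continuousWithinAt
  have hinv : ContinuousOn (fun s => (φ s)⁻¹) (v '' [[a, b]]) := by
    rintro _ ⟨t, ht, rfl⟩
    exact (hφ.continuousAt.inv₀ (hφv t ht)).continuousWithinAt
  have hsubst := integral_comp_mul_deriv' hsol (hφ.comp_continuousOn hv).neg hinv
  have hone : ∀ t ∈ [[a, b]], ((fun s => (φ s)⁻¹) ∘ v) t * -φ (v t) = -1 := fun t ht => by
    simp [inv_mul_cancel₀ (hφv t ht)]
  rw [integral_congr hone] at hsubst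
  simp only [intervalIntegral.integral_const, smul_eq_mul, mul_neg, mul_one] at hsubst
  rw [integral_symm, ← hsubst, neg_neg]

theorem lt_integral_inv_of_forall_pos {T : ℝ} (hφ : Continuous φ) (hφpos : ∀ r > 0, 0 < φ r)
    (hint : ∀ x > 0, IntegrableOn (fun s => (φ s)⁻¹) (Ioc 0 x))
    (hsol : ∀ t ∈ Icc 0 T, HasDerivAt v (-φ (v t)) t) (hv : ∀ t ∈ Icc 0 T, 0 < v t)
    (hT : 0 ≤ T) : T < ∫ s in (0)..v 0, (φ s)⁻¹ := by
  have hφ_int : ∀ x > 0, IntervalIntegrable (fun s => (φ s)⁻¹) volume 0 x := fun x hx =>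
    (intervalIntegrable_iff_integrableOn_Ioc_of_le hx.le).2 (hint x hx)
  have hvT := hv T ⟨hT, le_rfl⟩
  have hv0 := hv 0 ⟨le_rfl, hT⟩
  have htravel : ∫ s in v T..v 0, (φ s)⁻¹ = T := by
    rw [← uIcc_of_le hT] at hsol hv
    simpa using integral_inv_eq_sub_of_hasDerivAt hφ hsol fun t ht => (hφpos _ (hv t ht)).ne'
  have hsplit := integral_add_adjacent_intervals (hφ_int _ hvT)
    ((hφ_int _ hvT).symm.trans (hφ_int _ hv0))
  have hrest : 0 < ∫ s in (0)..v T, (φ s)⁻¹ :=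
    intervalIntegral_pos_of_pos_on (hφ_int _ hvT) (fun s hs => inv_pos.2 (hφpos s hs.1)) hvT
  linarith

theorem eq_zero_of_eq_zero_of_le {t₀ t : ℝ} (hφ : ∀ r, 0 ≤ r * φ r)
    (hsol : ∀ s ≥ t₀, HasDerivAt v (-φ (v s)) s) (h₀ : v t₀ = 0) (ht : t₀ ≤ t) : v t = 0 := by
  have hsq : ∀ s ∈ Ici t₀, HasDerivAt (fun s => v s ^ 2) (-(2 * (v s * φ (v s)))) s :=
    fun s hs => by simpa [mul_assoc] using (hsol s hs).fun_pow 2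
  have hanti : AntitoneOn (fun s => v s ^ 2) (Ici t₀) := by
    refine antitoneOn_of_hasDerivWithinAt_nonpos (convex_Ici t₀)
      (fun s hs => (hsq s hs).continuousAt.continuousWithinAt) (fun s hs => ?_) (fun s _ => ?_)
      (f' := fun s => -(2 * (v s * φ (v s))))
    · rw [interior_Ici] at hs
      exact (hsq s (mem_Ici.2 (le_of_lt hs))).hasDerivWithinAt
    · linarith [hφ (v s)]
  have hle : v t ^ 2 ≤ 0 := by simpa [h₀] using hanti (mem_Ici.2 le_rfl) ht ht
  exact pow_eq_zero_iff two_ne_zero |>.1 (le_antisymm hle (sq_nonneg _))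

end ScalarODE

theorem finite_time_convergence_scalar_ode_general
    (φ : ℝ → ℝ) (hφc : Continuous φ)
    (hφpos : ∀ r : ℝ, r ≠ 0 → r * φ r > 0)
    (hint : ∀ v₀ > (0:ℝ), IntegrableOn (fun s => (φ s)⁻¹) (Ioc 0 v₀))
    (v : ℝ → ℝ) (v₀ : ℝ) (hv₀ : 0 < v₀)
    (hsol : ∀ t ≥ (0:ℝ), HasDerivAt v (-φ (v t)) t)
    (hinit : v 0 = v₀) :
    ∀ t ≥ ∫ s in Ioc (0:ℝ) v₀, (φ s)⁻¹, v t = 0 := by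
  intro t ht
  have hφ_pos : ∀ r > 0, 0 < φ r := fun r hr => pos_of_mul_pos_right (hφpos r hr.ne') hr.le
  have hφ_sign : ∀ r, 0 ≤ r * φ r := fun r => by
    rcases eq_or_ne r 0 with rfl | hr
    · simp
    · exact (hφpos r hr).le
  set T := ∫ s in Ioc (0:ℝ) v₀, (φ s)⁻¹
  have hT : 0 ≤ T := setIntegral_nonneg measurableSet_Ioc fun s hs => (inv_pos.2 (hφ_pos s hs.1)).le
  obtain ⟨t₀, ht₀, hvt₀⟩ : ∃ t₀ ∈ Icc 0 T, v t₀ = 0 := by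
    by_contra! hne
    have hvpos := isPreconnected_Icc.forall_pos_of_forall_ne_zero
      (fun s hs => (hsol s hs.1).continuousAt.continuousWithinAt) ⟨le_rfl, hT⟩ (hinit ▸ hv₀) hne
    have := lt_integral_inv_of_forall_pos hφc hφ_pos hint (fun s hs => hsol s hs.1) hvpos hT
    rw [hinit, integral_of_le hv₀.le] at this
    exact this.false
  exact eq_zero_of_eq_zero_of_le hφ_sign (fun s hs => hsol s (ht₀.1.trans hs)) hvt₀ (ht₀.2.trans ht)

theorem finite_time_convergence_scalar_ode
    (φ : ℝ → ℝ) (hφc : Continuous φ) (hφmono : Monotone φ)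
    (hφ0 : φ 0 = 0) (hφpos : ∀ r : ℝ, r ≠ 0 → r * φ r > 0)
    (hint : ∀ v₀ > (0:ℝ), IntegrableOn (fun s => (φ s)⁻¹) (Ioc 0 v₀))
    (v : ℝ → ℝ) (v₀ : ℝ) (hv₀ : 0 < v₀)
    (hsol : ∀ t ≥ (0:ℝ), HasDerivAt v (-φ (v t)) t)
    (hinit : v 0 = v₀) :
    ∀ t ≥ ∫ s in Ioc (0:ℝ) v₀, (φ s)⁻¹, v t = 0 :=
  finite_time_convergence_scalar_ode_general φ hφc hφpos hint v v₀ hv₀ hsol hinit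
end

section
/- Suppose V : [0,∞) → ℝ is nonnegative, absolutely continuous, and satisfies V'(t) ≤ -a·V(t)^p - b·V(t)^q for almost every t with V(t) > 0, where a, b > 0, 0 < p < 1, q > 1. Then V(t) = 0 for all t ≥ 1/(a(1-p)) + 1/(b(q-1)), regardless of V(0). -/
/-!
Along a positive solution, `V ^ (1 - q) / (q - 1)` grows at rate at least `b` and
`V ^ (1 - p) / (1 - p)` decreases at rate at least `a`. The first forces `V < 1` by time
`1 / (b (q - 1))`, however large `V 0` is; from a value below `1`, the second makes `V` vanish
within a further `1 / (a (1 - p))`. Since `V ≥ 0` has a local minimum wherever it vanishes, `V` is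
nonincreasing and stays `0` from then on.
-/

open Set Filter Topology

theorem deriv_nonpos_of_eventually_nonneg {f : ℝ → ℝ} {t : ℝ} (hf : ∀ᶠ y in 𝓝 t, 0 ≤ f y)
    (h : 0 < f t → deriv f t ≤ 0) : deriv f t ≤ 0 := by
  rcases hf.self_of_nhds.lt_or_eq with hpos | hzero
  · exact h hpos
  · have hmin : IsLocalMin f t := by
      filter_upwards [hf] with y hy
      rwa [← hzero]
    exact hmin.deriv_eq_zero.le

theorem antitoneOn_Ici_of_deriv_nonpos_of_pos {f : ℝ → ℝ} {s : ℝ}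
    (hf : ∀ t ≥ s, DifferentiableAt ℝ f t) (hf0 : ∀ t ≥ s, 0 ≤ f t)
    (hf' : ∀ t > s, 0 < f t → deriv f t ≤ 0) : AntitoneOn f (Ici s) := by
  refine antitoneOn_of_deriv_nonpos (convex_Ici s)
    (fun t ht => (hf t ht).continuousAt.continuousWithinAt) ?_ ?_ <;> rw [interior_Ici]
  · exact fun t ht => (hf t ht.le).differentiableWithinAt
  · intro t ht
    refine deriv_nonpos_of_eventually_nonneg ?_ (hf' t ht)
    filter_upwards [Ioi_mem_nhds ht] with y hy using hf0 y hy.le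

theorem hasDerivAt_rpow_one_sub_div {f : ℝ → ℝ} {t r : ℝ} (hr : r ≠ 1)
    (hf : DifferentiableAt ℝ f t) (hpos : 0 < f t) :
    HasDerivAt (fun s => f s ^ (1 - r) / (1 - r)) (f t ^ (-r) * deriv f t) t := by
  have hr' : 1 - r ≠ 0 := sub_ne_zero.mpr hr.symm
  refine ((hf.hasDerivAt.rpow_const (Or.inl hpos.ne')).div_const (1 - r)).congr_deriv ?_
  rw [sub_sub_cancel_left]
  field_simp

theorem rpow_one_sub_div_add_mul_le {f : ℝ → ℝ} {s e c r : ℝ} (hr : r ≠ 1) (hse : s ≤ e)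
    (hf : ∀ t ∈ Icc s e, DifferentiableAt ℝ f t) (hpos : ∀ t ∈ Icc s e, 0 < f t)
    (hf' : ∀ t ∈ Ioo s e, deriv f t ≤ -c * f t ^ r) :
    f e ^ (1 - r) / (1 - r) + c * (e - s) ≤ f s ^ (1 - r) / (1 - r) := by
  have hg : ∀ t ∈ Icc s e,
      HasDerivAt (fun s => f s ^ (1 - r) / (1 - r)) (f t ^ (-r) * deriv f t) t :=
    fun t ht => hasDerivAt_rpow_one_sub_div hr (hf t ht) (hpos t ht)
  have hg' : ∀ t ∈ interior (Icc s e), deriv (fun s => f s ^ (1 - r) / (1 - r)) t ≤ -c := by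
    rw [interior_Icc]
    intro t ht
    have hft := hpos t (Ioo_subset_Icc_self ht)
    calc deriv (fun s => f s ^ (1 - r) / (1 - r)) t = f t ^ (-r) * deriv f t :=
          (hg t (Ioo_subset_Icc_self ht)).deriv
      _ ≤ f t ^ (-r) * (-c * f t ^ r) := by gcongr; exact hf' t ht
      _ = -c := by
        rw [mul_left_comm, ← Real.rpow_add hft, neg_add_cancel, Real.rpow_zero, mul_one]
  have := (convex_Icc s e).image_sub_le_mul_sub_of_deriv_le
    (fun t ht => (hg t ht).continuousAt.continuousWithinAt)
    (fun t ht => (hg t (interior_subset ht)).differentiableAt.differentiableWithinAt) hg'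
    s (left_mem_Icc.mpr hse) e (right_mem_Icc.mpr hse) hse
  linarith

section

variable {f : ℝ → ℝ} {s e c r : ℝ}

theorem mul_sub_lt_rpow_left_of_lt_one (hr : r < 1) (hse : s ≤ e)
    (hf : ∀ t ∈ Icc s e, DifferentiableAt ℝ f t) (hpos : ∀ t ∈ Icc s e, 0 < f t)
    (hf' : ∀ t ∈ Ioo s e, deriv f t ≤ -c * f t ^ r) :
    c * (1 - r) * (e - s) < f s ^ (1 - r) := by
  have hr' : 0 < 1 - r := sub_pos.mpr hr
  have h := rpow_one_sub_div_add_mul_le hr.ne hse hf hpos hf'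
  have he : 0 < f e ^ (1 - r) := Real.rpow_pos_of_pos (hpos e (right_mem_Icc.mpr hse)) _
  rw [div_add' _ _ _ hr'.ne', div_le_div_iff_of_pos_right hr'] at h
  linarith

theorem mul_sub_lt_rpow_right_of_one_lt (hr : 1 < r) (hse : s ≤ e)
    (hf : ∀ t ∈ Icc s e, DifferentiableAt ℝ f t) (hpos : ∀ t ∈ Icc s e, 0 < f t)
    (hf' : ∀ t ∈ Ioo s e, deriv f t ≤ -c * f t ^ r) :
    c * (r - 1) * (e - s) < f e ^ (1 - r) := by
  have hr' : 1 - r < 0 := sub_neg.mpr hr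
  have h := rpow_one_sub_div_add_mul_le hr.ne' hse hf hpos hf'
  have hs : 0 < f s ^ (1 - r) := Real.rpow_pos_of_pos (hpos s (left_mem_Icc.mpr hse)) _
  rw [div_add' _ _ _ hr'.ne, div_le_div_right_of_neg hr'] at h
  linarith

end

theorem sub_lt_of_deriv_le_neg_rpow_sub_rpow {f : ℝ → ℝ} {s e a b p q : ℝ} (ha : 0 < a)
    (hb : 0 < b) (hp : p < 1) (hq : 1 < q)
    (hf : ∀ t ∈ Icc s e, DifferentiableAt ℝ f t) (hpos : ∀ t ∈ Icc s e, 0 < f t)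
    (hf' : ∀ t ∈ Ioo s e, deriv f t ≤ -a * f t ^ p - b * f t ^ q) :
    e - s < 1 / (a * (1 - p)) + 1 / (b * (q - 1)) := by
  set T₁ := 1 / (a * (1 - p))
  set T₂ := 1 / (b * (q - 1))
  have hap : 0 < a * (1 - p) := mul_pos ha (sub_pos.mpr hp)
  have hbq : 0 < b * (q - 1) := mul_pos hb (sub_pos.mpr hq)
  have hT₁ : a * (1 - p) * T₁ = 1 := mul_one_div_cancel hap.ne'
  have hT₂ : b * (q - 1) * T₂ = 1 := mul_one_div_cancel hbq.ne'
  have hT₂pos : 0 < T₂ := by positivity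
  by_contra! he
  set m := s + T₂
  have hsm : s ≤ m := by linarith
  have hme : m ≤ e := by linarith [show 0 < T₁ by positivity]
  have hfp : ∀ t ∈ Ioo s e, deriv f t ≤ -a * f t ^ p := fun t ht => by
    linarith [hf' t ht, mul_pos hb (Real.rpow_pos_of_pos (hpos t (Ioo_subset_Icc_self ht)) q)]
  have hfq : ∀ t ∈ Ioo s e, deriv f t ≤ -b * f t ^ q := fun t ht => by
    linarith [hf' t ht, mul_pos ha (Real.rpow_pos_of_pos (hpos t (Ioo_subset_Icc_self ht)) p)]
  have h₁ : 1 < f m ^ (1 - q) := by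
    have hsub : Icc s m ⊆ Icc s e := Icc_subset_Icc_right hme
    have := mul_sub_lt_rpow_right_of_one_lt hq hsm (fun t ht => hf t (hsub ht))
      (fun t ht => hpos t (hsub ht)) (fun t ht => hfq t (Ioo_subset_Ioo_right hme ht))
    rwa [add_sub_cancel_left, hT₂] at this
  have h₂ : 1 < f m ^ (1 - p) := by
    have hsub : Icc m e ⊆ Icc s e := Icc_subset_Icc_left hsm
    have := mul_sub_lt_rpow_left_of_lt_one hp hme (fun t ht => hf t (hsub ht))
      (fun t ht => hpos t (hsub ht)) (fun t ht => hfp t (Ioo_subset_Ioo_left hsm ht))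
    calc 1 = a * (1 - p) * T₁ := hT₁.symm
      _ ≤ a * (1 - p) * (e - m) := by gcongr; linarith
      _ < f m ^ (1 - p) := this
  have hfm := hpos m ⟨hsm, hme⟩
  rcases le_total (f m) 1 with hle | hge
  · exact h₂.not_ge (Real.rpow_le_one hfm.le hle (by linarith))
  · exact h₁.not_ge (Real.rpow_le_one_of_one_le_of_nonpos hge (by linarith))

theorem polyakov_fixed_time_scalar_general
    (a b p q : ℝ) (ha : 0 < a) (hb : 0 < b) (hp1 : p < 1) (hq : 1 < q)
    (V : ℝ → ℝ) (hVnonneg : ∀ t ≥ (0:ℝ), 0 ≤ V t)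
    (hVdiff : ∀ t ≥ (0:ℝ), DifferentiableAt ℝ V t)
    (hineq : ∀ t ≥ (0:ℝ), V t > 0 → deriv V t ≤ -a * V t ^ p - b * V t ^ q) :
    ∀ t ≥ 1 / (a * (1 - p)) + 1 / (b * (q - 1)), V t = 0 := by
  intro t ht
  have ht₀ : 0 ≤ t := by
    have := sub_pos.mpr hp1
    have := sub_pos.mpr hq
    exact le_trans (by positivity) ht
  have hanti : AntitoneOn V (Ici 0) :=
    antitoneOn_Ici_of_deriv_nonpos_of_pos hVdiff hVnonneg fun s hs hVs =>
      (hineq s hs.le hVs).trans <| by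
        nlinarith [Real.rpow_pos_of_pos hVs p, Real.rpow_pos_of_pos hVs q]
  by_contra hne
  have hpos : ∀ s ∈ Icc 0 t, 0 < V s := fun s hs =>
    ((hVnonneg t ht₀).lt_of_ne' hne).trans_le (hanti hs.1 ht₀ hs.2)
  have := sub_lt_of_deriv_le_neg_rpow_sub_rpow ha hb hp1 hq (fun s hs => hVdiff s hs.1) hpos
    fun s hs => hineq s hs.1.le (hpos s (Ioo_subset_Icc_self hs))
  linarith

theorem polyakov_fixed_time_scalar
    (a b p q : ℝ) (ha : 0 < a) (hb : 0 < b) (hp0 : 0 < p) (hp1 : p < 1) (hq : 1 < q)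
    (V : ℝ → ℝ) (hVnonneg : ∀ t ≥ (0:ℝ), 0 ≤ V t)
    (hVdiff : ∀ t ≥ (0:ℝ), DifferentiableAt ℝ V t)
    (hineq : ∀ t ≥ (0:ℝ), V t > 0 → deriv V t ≤ -a * V t ^ p - b * V t ^ q) :
    ∀ t ≥ 1 / (a * (1 - p)) + 1 / (b * (q - 1)), V t = 0 :=
  polyakov_fixed_time_scalar_general a b p q ha hb hp1 hq V hVnonneg hVdiff hineq
end

section
/- Suppose g : [0,∞) → ℝ is absolutely continuous, nonnegative whenever defined on the trajectory, and satisfies g'(t) ≤ -φ(g(t)) for almost every t, where φ : [0,∞) → [0,∞) is continuous, monotonically increasing, φ(0)=0, φ(r)>0 for r>0, and sup_{r₀>0} ∫₀^{r₀} dr/φ(r) ≤ T_M < ∞. Then g(t) = 0 for all t ≥ T_M, independently of g(0) ≥ 0. -/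
/-!
With `Φ r = ∫₀^r dr / φ(r)`, the chain rule and `g' ≤ -φ(g)` give `(Φ ∘ g)' ≤ -1` as long as
`g > 0`, so `t ↦ Φ (g t) + t` is antitone there. If `g (T_M) > 0`, then `g > 0` on `[0, T_M]`
(since `g` is antitone), hence `Φ (g T_M) + T_M ≤ Φ (g 0) ≤ T_M`, contradicting `Φ (g T_M) > 0`.
-/

open MeasureTheory Set

lemma antitoneOn_of_hasDerivAt_nonpos {D : Set ℝ} (hD : Convex ℝ D) {f f' : ℝ → ℝ}
    (hf : ∀ x ∈ D, HasDerivAt f (f' x) x) (hf' : ∀ x ∈ D, f' x ≤ 0) : AntitoneOn f D :=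
  antitoneOn_of_hasDerivWithinAt_nonpos hD
    (fun x hx ↦ (hf x hx).continuousAt.continuousWithinAt)
    (fun x hx ↦ (hf x (interior_subset hx)).hasDerivWithinAt)
    (fun x hx ↦ hf' x (interior_subset hx))

section IntegralInv

variable {φ : ℝ → ℝ}

lemma integral_inv_pos (hφpos : ∀ r > 0, φ r > 0) {r : ℝ} (hr : 0 < r)
    (hint : IntervalIntegrable (fun x ↦ (φ x)⁻¹) volume 0 r) :
    0 < ∫ x in (0 : ℝ)..r, (φ x)⁻¹ :=
  intervalIntegral.intervalIntegral_pos_of_pos_on hint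
    (fun x hx ↦ inv_pos.mpr (hφpos x hx.1)) hr

lemma hasDerivAt_integral_inv (hφc : Continuous φ) {r : ℝ} (hr : φ r ≠ 0)
    (hint : IntervalIntegrable (fun x ↦ (φ x)⁻¹) volume 0 r) :
    HasDerivAt (fun r ↦ ∫ x in (0 : ℝ)..r, (φ x)⁻¹) (φ r)⁻¹ r :=
  intervalIntegral.integral_hasDerivAt_right hint
    hφc.measurable.inv.stronglyMeasurable.stronglyMeasurableAtFilter
    (hφc.continuousAt.inv₀ hr)

lemma integral_inv_comp_add_le (hφc : Continuous φ) (hφpos : ∀ r > 0, φ r > 0)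
    (hint : ∀ r > 0, IntervalIntegrable (fun x ↦ (φ x)⁻¹) volume 0 r)
    {g : ℝ → ℝ} {a b : ℝ} (hab : a ≤ b) (hg_pos : ∀ t ∈ Icc a b, 0 < g t)
    (hgd : ∀ t ∈ Icc a b, DifferentiableAt ℝ g t)
    (hineq : ∀ t ∈ Icc a b, deriv g t ≤ -φ (g t)) :
    (∫ x in (0 : ℝ)..g b, (φ x)⁻¹) + (b - a) ≤ ∫ x in (0 : ℝ)..g a, (φ x)⁻¹ := by
  have hderiv : ∀ t ∈ Icc a b, HasDerivAt (fun s ↦ (∫ x in (0 : ℝ)..g s, (φ x)⁻¹) + s)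
      ((φ (g t))⁻¹ * deriv g t + 1) t := fun t ht ↦
    ((hasDerivAt_integral_inv hφc (hφpos _ (hg_pos t ht)).ne' (hint _ (hg_pos t ht))).comp t
      (hgd t ht).hasDerivAt).add (hasDerivAt_id t)
  have hslope : ∀ t ∈ Icc a b, (φ (g t))⁻¹ * deriv g t + 1 ≤ 0 := by
    intro t ht
    have hφt := hφpos _ (hg_pos t ht)
    calc (φ (g t))⁻¹ * deriv g t + 1 ≤ (φ (g t))⁻¹ * -φ (g t) + 1 := by
          gcongr; exact hineq t ht
      _ = 0 := by field_simp; ring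
  have := antitoneOn_of_hasDerivAt_nonpos (convex_Icc a b) hderiv hslope
    (left_mem_Icc.mpr hab) (right_mem_Icc.mpr hab) hab
  simp only at this
  linarith

end IntegralInv

theorem uniform_fixed_time_comparison_general
    (φ : ℝ → ℝ) (hφc : Continuous φ)
    (hφpos : ∀ r > (0:ℝ), φ r > 0) (hφnonneg : ∀ r ≥ (0:ℝ), 0 ≤ φ r)
    (T_M : ℝ)
    (hint : ∀ r₀ > (0:ℝ), IntegrableOn (fun r => (φ r)⁻¹) (Ioc 0 r₀) ∧
      ∫ r in Ioc (0:ℝ) r₀, (φ r)⁻¹ ≤ T_M)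
    (g : ℝ → ℝ) (hgnonneg : ∀ t ≥ (0:ℝ), 0 ≤ g t)
    (hgdiff : ∀ t ≥ (0:ℝ), DifferentiableAt ℝ g t)
    (hineq : ∀ t ≥ (0:ℝ), deriv g t ≤ -φ (g t)) :
    ∀ t ≥ T_M, g t = 0 := by
  have hint' : ∀ r > 0, IntervalIntegrable (fun x ↦ (φ x)⁻¹) volume 0 r := fun r hr ↦
    (intervalIntegrable_iff_integrableOn_Ioc_of_le hr.le).mpr (hint r hr).1
  have hbound : ∀ r > 0, ∫ x in (0 : ℝ)..r, (φ x)⁻¹ ≤ T_M := fun r hr ↦ by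
    rw [intervalIntegral.integral_of_le hr.le]; exact (hint r hr).2
  have hT : 0 ≤ T_M := (integral_inv_pos hφpos one_pos (hint' 1 one_pos)).le.trans
    (hbound 1 one_pos)
  have hg_anti : AntitoneOn g (Ici 0) :=
    antitoneOn_of_hasDerivAt_nonpos (convex_Ici 0) (fun t ht ↦ (hgdiff t ht).hasDerivAt)
      fun t ht ↦ (hineq t ht).trans (neg_nonpos.mpr (hφnonneg _ (hgnonneg t ht)))
  have hgT : g T_M = 0 := by
    by_contra hne
    have hgT_pos : 0 < g T_M := (hgnonneg T_M hT).lt_of_ne' hne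
    have hg_pos : ∀ t ∈ Icc 0 T_M, 0 < g t := fun t ht ↦
      hgT_pos.trans_le (hg_anti ht.1 hT ht.2)
    have := integral_inv_comp_add_le hφc hφpos hint' hT hg_pos
      (fun t ht ↦ hgdiff t ht.1) (fun t ht ↦ hineq t ht.1)
    linarith [integral_inv_pos hφpos hgT_pos (hint' _ hgT_pos),
      hbound _ (hg_pos 0 (left_mem_Icc.mpr hT))]
  intro t ht
  exact le_antisymm (hgT ▸ hg_anti hT (hT.trans ht) ht) (hgnonneg t (hT.trans ht))

theorem uniform_fixed_time_comparison
    (φ : ℝ → ℝ) (hφc : Continuous φ) (hφmono : Monotone φ)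
    (hφ0 : φ 0 = 0) (hφpos : ∀ r > (0:ℝ), φ r > 0) (hφnonneg : ∀ r ≥ (0:ℝ), 0 ≤ φ r)
    (T_M : ℝ)
    (hint : ∀ r₀ > (0:ℝ), IntegrableOn (fun r => (φ r)⁻¹) (Ioc 0 r₀) ∧
      ∫ r in Ioc (0:ℝ) r₀, (φ r)⁻¹ ≤ T_M)
    (g : ℝ → ℝ) (hgnonneg : ∀ t ≥ (0:ℝ), 0 ≤ g t)
    (hgdiff : ∀ t ≥ (0:ℝ), DifferentiableAt ℝ g t)
    (hineq : ∀ t ≥ (0:ℝ), deriv g t ≤ -φ (g t)) :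
    ∀ t ≥ T_M, g t = 0 :=
  uniform_fixed_time_comparison_general φ hφc hφpos hφnonneg T_M hint g hgnonneg hgdiff hineq
end
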